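/- arXiv:1002.3569 — 3 statements merged into one kernel-verified Lean document; each statement's English description precedes it below -/
import Mathlib

section
/- Let G₁ and G₂ be profinite groups and let K be an open subgroup of G₁ × G₂. Then there exist an open subgroup U₁ of G₁ and a subgroup K₂ of G₂ such that K ∩ (U₁ × G₂) = U₁ × K₂; that is, for u ∈ U₁ and g ∈ G₂ the pair (u, g) lies in K if and only if g ∈ K₂. -/
/-- For `x ∈ U` we have `(x, 1) ∈ K`, and `(x, y) = (x, 1) * (1, y)`. -/
theorem Subgroup.inf_prod_top_eq_prod_comap_inr {G₁ G₂ : Type*} [Group G₁] [Group G₂]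
    {K : Subgroup (G₁ × G₂)} {U : Subgroup G₁} (hU : U ≤ K.comap (MonoidHom.inl G₁ G₂)) :
    K ⊓ U.prod ⊤ = U.prod (K.comap (MonoidHom.inr G₁ G₂)) := by
  ext ⟨x, y⟩
  simp only [Subgroup.mem_inf, Subgroup.mem_prod, Subgroup.mem_top, and_true,
    Subgroup.mem_comap, MonoidHom.inr_apply]
  constructor
  · rintro ⟨hxy, hx⟩
    refine ⟨hx, ?_⟩
    simpa using K.mul_mem (K.inv_mem (hU hx)) hxy
  · rintro ⟨hx, hy⟩
    refine ⟨?_, hx⟩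
    simpa using K.mul_mem (hU hx) hy

theorem stmt1_general (G₁ G₂ : Type) [Group G₁] [Group G₂]
    [TopologicalSpace G₁]
    [TopologicalSpace G₂]
    (K : Subgroup (G₁ × G₂)) (hK : IsOpen (K : Set (G₁ × G₂))) :
    ∃ U₁ : Subgroup G₁, IsOpen (U₁ : Set G₁) ∧
      ∃ K₂ : Subgroup G₂, K ⊓ U₁.prod (⊤ : Subgroup G₂) = U₁.prod K₂ :=
  ⟨K.comap (MonoidHom.inl G₁ G₂), hK.preimage (Continuous.prodMk_left 1), _,
    Subgroup.inf_prod_top_eq_prod_comap_inr le_rfl⟩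

/-- Lemma 2.2 of the paper. If `K` is an open subgroup of a product
of two profinite groups `G₁ × G₂`, then there is an open subgroup `U₁ ≤ G₁` and a
subgroup `K₂ ≤ G₂` such that `K ∩ (U₁ × G₂) = U₁ × K₂`. -/
theorem stmt1 (G₁ G₂ : Type) [Group G₁] [Group G₂]
    [TopologicalSpace G₁] [IsTopologicalGroup G₁] [CompactSpace G₁] [T2Space G₁]
    [TotallyDisconnectedSpace G₁]
    [TopologicalSpace G₂] [IsTopologicalGroup G₂] [CompactSpace G₂] [T2Space G₂]
    [TotallyDisconnectedSpace G₂]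
    (K : Subgroup (G₁ × G₂)) (hK : IsOpen (K : Set (G₁ × G₂))) :
    ∃ U₁ : Subgroup G₁, IsOpen (U₁ : Set G₁) ∧
      ∃ K₂ : Subgroup G₂, K ⊓ U₁.prod (⊤ : Subgroup G₂) = U₁.prod K₂ :=
  stmt1_general G₁ G₂ K hK
end

section
/- Let F be a field and let C⁰, C¹, C² be finite-dimensional F-vector spaces, with nondegenerate symmetric bilinear forms ⟨·,·⟩ given on C⁰ and on C¹. Let d₀ : C⁰ → C¹ and d₁ : C¹ → C² be linear maps with d₁ ∘ d₀ = 0, and let ∂₁ : C¹ → C⁰ be the adjoint of d₀, i.e. ⟨d₀ x, y⟩ = ⟨x, ∂₁ y⟩ for all x ∈ C⁰, y ∈ C¹. Define H¹ = ker d₁ / im d₀ (first cohomology), Ω¹ = ker d₁ ∩ ker ∂₁ (closed and coclosed 1-chains), and Δ⁰ = ker(∂₁ ∘ d₀ : C⁰ → C⁰) (harmonic 0-chains). Then |dim_F H¹ − dim_F Ω¹| ≤ dim_F Δ⁰. -/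
/-!
Write `K = ker d₁`, `R = im d₀ ≤ K` and `Z = ker ∂₁`, so that `dim H¹ = dim K - dim R` and
`Ω¹ = K ⊓ Z`. Adjointness and the nondegeneracy of the form on `C⁰` give `R^⊥ ≤ Z`, and
`dim R^⊥ ≥ dim C¹ - dim R`; the modular law `dim (A ⊔ W) + dim (A ⊓ W) = dim A + dim W`
applied to `K` and `R^⊥` inside `C¹` then yields `dim H¹ ≤ dim Ω¹`. Applied to `Ω¹` and `R`
inside `K` it yields `dim Ω¹ - dim H¹ ≤ dim (R ⊓ Z)`, and `R ⊓ Z = d₀ (ker (∂₁ ∘ d₀))`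
has dimension at most `dim Δ⁰`.
-/

open Module

namespace Submodule

variable {K V : Type*} [DivisionRing K] [AddCommGroup V] [Module K V] [FiniteDimensional K V]

theorem finrank_add_finrank_le_of_sup_le {A W U : Submodule K V} (h : A ⊔ W ≤ U) :
    finrank K A + finrank K W ≤ finrank K U + finrank K ↥(A ⊓ W) := by
  rw [← finrank_sup_add_finrank_inf_eq]
  exact Nat.add_le_add_right (finrank_mono h) _

theorem finrank_quotient_comap_subtype_add_finrank {W U : Submodule K V} (h : W ≤ U) :
    finrank K (U ⧸ W.comap U.subtype) + finrank K W = finrank K U := by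
  rw [← (comapSubtypeEquivOfLe h).finrank_eq, finrank_quotient_add_finrank]

end Submodule

namespace LinearMap.BilinForm

variable {K V : Type*} [Field K] [AddCommGroup V] [Module K V] [FiniteDimensional K V]

theorem finrank_le_finrank_add_finrank_orthogonal (B : LinearMap.BilinForm K V)
    (W : Submodule K V) :
    finrank K V ≤ finrank K W + finrank K (B.orthogonal W) := by
  rw [finrank_add_finrank_orthogonal']
  exact Nat.le_add_right _ _

end LinearMap.BilinForm

section Adjoint

open Submodule

variable {F C0 C1 : Type*} [Field F] [AddCommGroup C0] [AddCommGroup C1]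
  [Module F C0] [Module F C1] {d0 : C0 →ₗ[F] C1} {del1 : C1 →ₗ[F] C0}

theorem orthogonal_range_le_ker_of_adjoint {B0 : LinearMap.BilinForm F C0}
    {B1 : LinearMap.BilinForm F C1} (hB0 : B0.SeparatingRight)
    (hadj : ∀ x y, B1 (d0 x) y = B0 x (del1 y)) :
    B1.orthogonal (LinearMap.range d0) ≤ LinearMap.ker del1 := fun y hy ↦
  hB0 _ fun x ↦ hadj x y ▸ hy (d0 x) ⟨x, rfl⟩

variable [FiniteDimensional F C1]

theorem finrank_le_finrank_range_add_finrank_inf_ker_of_adjoint {B0 : LinearMap.BilinForm F C0}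
    {B1 : LinearMap.BilinForm F C1} (hB0 : B0.SeparatingRight)
    (hadj : ∀ x y, B1 (d0 x) y = B0 x (del1 y)) (U : Submodule F C1) :
    finrank F U ≤ finrank F (LinearMap.range d0) + finrank F ↥(U ⊓ LinearMap.ker del1) := by
  set R := LinearMap.range d0
  have hR := LinearMap.BilinForm.finrank_le_finrank_add_finrank_orthogonal B1 R
  have hmodular := finrank_add_finrank_le_of_sup_le (le_top : U ⊔ B1.orthogonal R ≤ ⊤)
  have hinf : finrank F ↥(U ⊓ B1.orthogonal R) ≤ finrank F ↥(U ⊓ LinearMap.ker del1) :=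
    finrank_mono (inf_le_inf_left U (orthogonal_range_le_ker_of_adjoint hB0 hadj))
  rw [finrank_top] at hmodular
  omega

theorem finrank_inf_ker_add_finrank_range_le [FiniteDimensional F C0] {U : Submodule F C1}
    (hRU : LinearMap.range d0 ≤ U) :
    finrank F ↥(U ⊓ LinearMap.ker del1) + finrank F (LinearMap.range d0) ≤
      finrank F U + finrank F (LinearMap.ker (del1 ∘ₗ d0)) := by
  have hmodular := finrank_add_finrank_le_of_sup_le
    (sup_le (inf_le_left : U ⊓ LinearMap.ker del1 ≤ U) hRU)
  have hharmonic :
      LinearMap.range d0 ⊓ LinearMap.ker del1 = (LinearMap.ker (del1 ∘ₗ d0)).map d0 := by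
    rw [LinearMap.ker_comp, map_comap_eq]
  have hinf : finrank F ↥(U ⊓ LinearMap.ker del1 ⊓ LinearMap.range d0) ≤
      finrank F (LinearMap.ker (del1 ∘ₗ d0)) := by
    refine (finrank_mono ?_).trans (finrank_map_le d0 _)
    rw [← hharmonic, inf_comm]
    exact inf_le_inf_left _ inf_le_right
  omega

end Adjoint

theorem stmt3_general (F : Type) [Field F]
    (C0 C1 C2 : Type) [AddCommGroup C0] [AddCommGroup C1] [AddCommGroup C2]
    [Module F C0] [Module F C1] [Module F C2]
    [FiniteDimensional F C0] [FiniteDimensional F C1]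
    (B0 : LinearMap.BilinForm F C0) (B1 : LinearMap.BilinForm F C1)
    (hB0nd : B0.Nondegenerate)
    (d0 : C0 →ₗ[F] C1) (d1 : C1 →ₗ[F] C2) (del1 : C1 →ₗ[F] C0)
    (hcomplex : d1 ∘ₗ d0 = 0)
    (hadj : ∀ (x : C0) (y : C1), B1 (d0 x) y = B0 x (del1 y)) :
    |(Module.finrank F
        (LinearMap.ker d1 ⧸ (LinearMap.range d0).comap (LinearMap.ker d1).subtype) : ℤ) -
      (Module.finrank F (LinearMap.ker d1 ⊓ LinearMap.ker del1 : Submodule F C1) : ℤ)| ≤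
    (Module.finrank F (LinearMap.ker (del1 ∘ₗ d0)) : ℤ) := by
  have hRK : LinearMap.range d0 ≤ LinearMap.ker d1 := LinearMap.range_le_ker_iff.mpr hcomplex
  have hH1 := Submodule.finrank_quotient_comap_subtype_add_finrank hRK
  have hlower := finrank_le_finrank_range_add_finrank_inf_ker_of_adjoint hB0nd.2 hadj
    (LinearMap.ker d1)
  have hupper := finrank_inf_ker_add_finrank_range_le (del1 := del1) hRK
  rw [abs_le]
  constructor <;> omega

/-- Lemma 2.5 of the paper, the combinatorial `Hodge isomorphism'.
Given a complex `C⁰ → C¹ → C²` of finite-dimensional vector spaces, with nondegenerate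
symmetric bilinear forms on `C⁰` and `C¹` and `∂₁` the adjoint of `d₀`, the dimensions
of `H¹ = ker d₁ / im d₀` and of `Ω¹ = ker d₁ ∩ ker ∂₁` differ by at most
`dim Δ⁰ = dim ker (∂₁ ∘ d₀)`. -/
theorem stmt3 (F : Type) [Field F]
    (C0 C1 C2 : Type) [AddCommGroup C0] [AddCommGroup C1] [AddCommGroup C2]
    [Module F C0] [Module F C1] [Module F C2]
    [FiniteDimensional F C0] [FiniteDimensional F C1] [FiniteDimensional F C2]
    (B0 : LinearMap.BilinForm F C0) (B1 : LinearMap.BilinForm F C1)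
    (hB0nd : B0.Nondegenerate) (hB1nd : B1.Nondegenerate)
    (hB0symm : B0.IsSymm) (hB1symm : B1.IsSymm)
    (d0 : C0 →ₗ[F] C1) (d1 : C1 →ₗ[F] C2) (del1 : C1 →ₗ[F] C0)
    (hcomplex : d1 ∘ₗ d0 = 0)
    (hadj : ∀ (x : C0) (y : C1), B1 (d0 x) y = B0 x (del1 y)) :
    |(Module.finrank F
        (LinearMap.ker d1 ⧸ (LinearMap.range d0).comap (LinearMap.ker d1).subtype) : ℤ) -
      (Module.finrank F (LinearMap.ker d1 ⊓ LinearMap.ker del1 : Submodule F C1) : ℤ)| ≤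
    (Module.finrank F (LinearMap.ker (del1 ∘ₗ d0)) : ℤ) :=
  stmt3_general F C0 C1 C2 B0 B1 hB0nd d0 d1 del1 hcomplex hadj
end

section
/- Let p be a prime and let k, d be natural numbers with d ≤ p^k. Let f ∈ ℚ_p[X] be a polynomial of degree at most d such that f(z) ∈ ℤ_p for every z ∈ ℤ_p. Then for all x, y ∈ ℤ_p with x − y ∈ p^{k+1}ℤ_p, one has f(x) − f(y) ∈ pℤ_p. -/
/-!
Restricted to `ℤ_[p]`, `f` is a continuous `ℤ_[p]`-valued function whose `(d+1)`-st forward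
difference vanishes, so the Gregory–Newton formula at any base point `y` gives
`f (y + N) - f y = ∑_{0 < i ≤ d} (N choose i) Δⁱ f (y)` with integral `Δⁱ f (y)`. When
`p ^ (k+1) ∣ N` and `0 < i ≤ d < p ^ (k+1)`, the identity `i (N choose i) = N (N-1 choose i-1)`
forces `p ∣ N choose i`. This handles `x - y ∈ p ^ (k+1) ℕ`, and density of `ℕ` in `ℤ_[p]`
together with closedness of `pℤ_[p]` does the rest.
-/

open Finset Polynomial

theorem Nat.Prime.dvd_choose_of_pow_dvd {p e N j : ℕ} (hp : p.Prime) (hN : p ^ e ∣ N)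
    (hj0 : j ≠ 0) (hj : j < p ^ e) : p ∣ N.choose j := by
  obtain ⟨j, rfl⟩ := Nat.exists_eq_succ_of_ne_zero hj0
  obtain _ | n := N
  · simp
  by_contra hpC
  have hcop : (p ^ e).Coprime ((n + 1).choose (j + 1)) :=
    ((hp.coprime_iff_not_dvd).2 hpC).pow_left e
  have : p ^ e ∣ j + 1 :=
    hcop.dvd_of_dvd_mul_left (Nat.add_one_mul_choose_eq n j ▸ dvd_mul_of_dvd_left hN _)
  exact absurd (Nat.le_of_dvd j.succ_pos this) (by omega)

section fwdDiff

variable {M R : Type*} [AddCommMonoid M] [CommRing R] (h : M)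

theorem fwdDiff_iter_eq_zero_of_le {F : M → R} {n m : ℕ} (hF : (fwdDiff h)^[n] F = 0)
    (hnm : n ≤ m) :
    (fwdDiff h)^[m] F = 0 := by
  obtain ⟨j, rfl⟩ := Nat.exists_eq_add_of_le hnm
  rw [add_comm, Function.iterate_add_apply, hF]
  exact Function.iterate_fixed (fwdDiff_const h 0) j

theorem prime_dvd_sub_of_fwdDiff_iter_eq_zero {p e d N : ℕ} (hp : p.Prime) {F : M → R}
    (hF : (fwdDiff h)^[d + 1] F = 0) (hd : d < p ^ e) (hN : p ^ e ∣ N) (y : M) :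
    (p : R) ∣ F (y + N • h) - F y := by
  rw [shift_eq_sum_fwdDiff_iter h F N y, sum_range_succ', Nat.choose_zero_right, one_smul,
    Function.iterate_zero_apply, add_sub_cancel_right]
  refine dvd_sum fun i _ => ?_
  rcases le_or_gt (i + 1) d with hi | hi
  · obtain ⟨s, hs⟩ := hp.dvd_choose_of_pow_dvd hN i.succ_ne_zero (by omega)
    rw [hs, nsmul_eq_mul, Nat.cast_mul]
    exact (dvd_mul_right _ _).mul_right _
  · rw [fwdDiff_iter_eq_zero_of_le h hF hi, Pi.zero_apply, smul_zero]
    exact dvd_zero _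

end fwdDiff

section PadicInt

variable {p : ℕ} [Fact p.Prime]

theorem PadicInt.isClosed_setOf_dvd : IsClosed {x : ℤ_[p] | (p : ℤ_[p]) ∣ x} := by
  have : {x : ℤ_[p] | (p : ℤ_[p]) ∣ x} = {x | ‖x‖ ≤ (p : ℝ) ^ (-(1 : ℕ) : ℤ)} := by
    ext x
    rw [Set.mem_ofPred_eq, Set.mem_ofPred_eq, PadicInt.norm_le_pow_iff_mem_span_pow, pow_one,
      Ideal.mem_span_singleton]
  rw [this]
  exact isClosed_le continuous_norm continuous_const

noncomputable def Polynomial.evalPadicInt (f : ℚ_[p][X])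
    (hf : ∀ z : ℤ_[p], ‖f.eval (z : ℚ_[p])‖ ≤ 1) : ℤ_[p] → ℤ_[p] :=
  fun z => ⟨f.eval (z : ℚ_[p]), hf z⟩

variable (f : ℚ_[p][X]) (hf : ∀ z : ℤ_[p], ‖f.eval (z : ℚ_[p])‖ ≤ 1)

theorem Polynomial.coe_evalPadicInt (z : ℤ_[p]) :
    (f.evalPadicInt hf z : ℚ_[p]) = f.eval (z : ℚ_[p]) := rfl

theorem Polynomial.continuous_evalPadicInt : Continuous (f.evalPadicInt hf) :=
  (f.continuous.comp continuous_subtype_val).subtype_mk _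

theorem Polynomial.fwdDiff_iter_evalPadicInt_eq_zero {n : ℕ} (hn : f.natDegree < n) :
    (fwdDiff 1)^[n] (f.evalPadicInt hf) = 0 := by
  funext z
  have := congr_fun (Polynomial.fwdDiff_iter_eq_zero_of_degree_lt hn) (z : ℚ_[p])
  rw [fwdDiff_iter_eq_sum_shift] at this ⊢
  apply PadicInt.ext
  simpa [coe_evalPadicInt] using this

theorem PadicInt.dvd_sub_of_fwdDiff_iter_eq_zero {d e : ℕ} {F : ℤ_[p] → ℤ_[p]}
    (hFc : Continuous F) (hF : (fwdDiff 1)^[d + 1] F = 0) (hd : d < p ^ e) (y c : ℤ_[p]) :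
    (p : ℤ_[p]) ∣ F (y + (p : ℤ_[p]) ^ e * c) - F y := by
  refine denseRange_natCast.induction_on c
    (isClosed_setOf_dvd.preimage (by fun_prop)) fun m => ?_
  simpa using prime_dvd_sub_of_fwdDiff_iter_eq_zero 1 Fact.out hF hd (dvd_mul_right _ m) y

end PadicInt

/-- the consequence of Lucas' theorem used in Section 3.3 of the
paper. If `f ∈ ℚ_p[X]` has degree at most `d ≤ p^k` and takes `ℤ_p` into `ℤ_p`, then
`f(x) ≡ f(y) (mod p)` whenever `x ≡ y (mod p^{k+1})`. -/
theorem stmt9 (p : ℕ) [Fact p.Prime] (k d : ℕ) (hd : d ≤ p ^ k)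
    (f : Polynomial ℚ_[p]) (hdeg : f.natDegree ≤ d)
    (hint : ∀ z : ℤ_[p], ∃ w : ℤ_[p], f.eval (z : ℚ_[p]) = (w : ℚ_[p])) :
    ∀ x y : ℤ_[p], (∃ c : ℤ_[p], x - y = (p : ℤ_[p]) ^ (k + 1) * c) →
      ∃ w : ℤ_[p], f.eval (x : ℚ_[p]) - f.eval (y : ℚ_[p]) = (p : ℚ_[p]) * (w : ℚ_[p]) := by
  have hf (z : ℤ_[p]) : ‖f.eval (z : ℚ_[p])‖ ≤ 1 := by
    obtain ⟨w, hw⟩ := hint z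
    exact hw ▸ w.norm_le_one
  have hdp : d < p ^ (k + 1) := hd.trans_lt (Nat.pow_lt_pow_succ (Fact.out : p.Prime).one_lt)
  rintro x y ⟨c, hc⟩
  obtain ⟨w, hw⟩ := PadicInt.dvd_sub_of_fwdDiff_iter_eq_zero (f.continuous_evalPadicInt hf)
    (f.fwdDiff_iter_evalPadicInt_eq_zero hf (by omega)) hdp y c
  rw [← hc, add_sub_cancel] at hw
  exact ⟨w, by simpa [Polynomial.coe_evalPadicInt] using congrArg ((↑) : ℤ_[p] → ℚ_[p]) hw⟩
end
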